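/- arXiv:2004.10281 — 2 statements merged into one kernel-verified Lean document; each statement's English description precedes it below -/
import Mathlib

section
/- Let the weight vector w ∈ ℝ^{n_w} be distributed as a product of independent one-dimensional Gaussians ℙ = ⨂_{j=1}^{n_w} N(μ_j, Σ_j) with Σ_j > 0. Let T ⊆ ℝ^m, let the safe output set be S = {y ∈ ℝ^{n_c} | C_S y + d_S ≥ 0} for a matrix C_S ∈ ℝ^{n_S × n_c} and vector d_S ∈ ℝ^{n_S} (inequality componentwise). Suppose [w^{L,1}, w^{U,1}], …, [w^{L,M}, w^{U,M}] are pairwise disjoint hyper-rectangles in ℝ^{n_w} such that for every i, every w in the i-th rectangle, and every x ∈ T one has C_S f^w(x) + d_S ≥ 0 componentwise. Then p := Σ_{i=1}^M Π_{j=1}^{n_w} ℙ_j([w^{L,i}_j, w^{U,i}_j]) satisfies p ≤ P_safe(T,S), where ℙ_j = N(μ_j, Σ_j). -/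
open MeasureTheory ProbabilityTheory Matrix Function

theorem sum_measure_le_measure_of_pairwise_disjoint_of_subset {α ι : Type*} [MeasurableSpace α]
    [Fintype ι] (μ : Measure α) {A : ι → Set α} {B : Set α} (hA : ∀ i, MeasurableSet (A i))
    (hdisj : Pairwise (Disjoint on A)) (hAB : ∀ i, A i ⊆ B) :
    ∑ i, μ (A i) ≤ μ B := by
  rw [← tsum_fintype (L := .unconditional ι)]
  exact (tsum_meas_le_meas_iUnion_of_disjoint μ hA hdisj).trans
    (measure_mono (Set.iUnion_subset hAB))

theorem algorithm_lower_bound_psafe_general {nw m nc nS M : ℕ}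
    (μ : Fin nw → ℝ) (Sv : Fin nw → NNReal)
    (T : Set (Fin m → ℝ))
    (C : Matrix (Fin nS) (Fin nc) ℝ) (d : Fin nS → ℝ)
    (f : (Fin nw → ℝ) → (Fin m → ℝ) → (Fin nc → ℝ))
    (wL wU : Fin M → Fin nw → ℝ)
    (hdisj : ∀ i i' : Fin M, i ≠ i' →
      Disjoint (Set.univ.pi fun j => Set.Icc (wL i j) (wU i j))
               (Set.univ.pi fun j => Set.Icc (wL i' j) (wU i' j)))
    (hsafe : ∀ i : Fin M, ∀ w ∈ Set.univ.pi fun j => Set.Icc (wL i j) (wU i j),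
      ∀ x ∈ T, ∀ s : Fin nS, C.mulVec (f w x) s + d s ≥ 0) :
    ∑ i : Fin M, ∏ j : Fin nw, gaussianReal (μ j) (Sv j) (Set.Icc (wL i j) (wU i j)) ≤
      Measure.pi (fun j => gaussianReal (μ j) (Sv j))
        {w | ∀ x ∈ T, f w x ∈ {y : Fin nc → ℝ | ∀ s : Fin nS, C.mulVec y s + d s ≥ 0}} := by
  simp only [← Measure.pi_pi]
  exact sum_measure_le_measure_of_pairwise_disjoint_of_subset _
    (fun i => MeasurableSet.univ_pi fun j => measurableSet_Icc) hdisj hsafe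

/-- Correctness of the lower-bounding algorithm for probabilistic safety of Bayesian neural
networks with a diagonal-Gaussian weight posterior and a polyhedral safe output set
`S = {y | C y + d ≥ 0}`: the sum over disjoint certified-safe weight rectangles of the
products of coordinatewise Gaussian probabilities is a lower bound on `P_safe(T,S)`. -/
theorem algorithm_lower_bound_psafe {nw m nc nS M : ℕ}
    (μ : Fin nw → ℝ) (Sv : Fin nw → NNReal) (hS : ∀ j, 0 < Sv j)
    (T : Set (Fin m → ℝ))
    (C : Matrix (Fin nS) (Fin nc) ℝ) (d : Fin nS → ℝ)
    (f : (Fin nw → ℝ) → (Fin m → ℝ) → (Fin nc → ℝ))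
    (wL wU : Fin M → Fin nw → ℝ)
    (hdisj : ∀ i i' : Fin M, i ≠ i' →
      Disjoint (Set.univ.pi fun j => Set.Icc (wL i j) (wU i j))
               (Set.univ.pi fun j => Set.Icc (wL i' j) (wU i' j)))
    (hsafe : ∀ i : Fin M, ∀ w ∈ Set.univ.pi fun j => Set.Icc (wL i j) (wU i j),
      ∀ x ∈ T, ∀ s : Fin nS, C.mulVec (f w x) s + d s ≥ 0) :
    ∑ i : Fin M, ∏ j : Fin nw, gaussianReal (μ j) (Sv j) (Set.Icc (wL i j) (wU i j)) ≤
      Measure.pi (fun j => gaussianReal (μ j) (Sv j))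
        {w | ∀ x ∈ T, f w x ∈ {y : Fin nc → ℝ | ∀ s : Fin nS, C.mulVec y s + d s ≥ 0}} :=
  algorithm_lower_bound_psafe_general μ Sv T C d f wL wU hdisj hsafe
end

section
/- Let σ : ℝ → ℝ be monotone nondecreasing. Consider the feed-forward network defined by z^{(0)} = x, ζ^{(k+1)}_i = Σ_j W^{(k)}_{ij} z^{(k)}_j + b^{(k)}_i and z^{(k)}_i = σ(ζ^{(k)}_i) for k = 0, …, K, with output f^w(x) = ζ^{(K+1)}. Suppose the input satisfies x^L ≤ x ≤ x^U componentwise and, for each layer k, W^{(k),L} ≤ W^{(k)} ≤ W^{(k),U} and b^{(k),L} ≤ b^{(k)} ≤ b^{(k),U} entrywise. Define recursively z^{(0),L} = x^L, z^{(0),U} = x^U; t^{(k),L}_{ij} = min{W^{(k),L}_{ij} z^{(k),L}_j, W^{(k),U}_{ij} z^{(k),L}_j, W^{(k),L}_{ij} z^{(k),U}_j, W^{(k),U}_{ij} z^{(k),U}_j} and t^{(k),U}_{ij} the corresponding maximum; ζ^{(k+1),L} = Σ_j t^{(k),L}_{:j} + b^{(k),L}, ζ^{(k+1),U} = Σ_j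 t^{(k),U}_{:j} + b^{(k),U}; and z^{(k),L} = σ(ζ^{(k),L}), z^{(k),U} = σ(ζ^{(k),U}) applied componentwise. Then f^w(x) = ζ^{(K+1)} ∈ [ζ^{(K+1),L}, ζ^{(K+1),U}] componentwise, for every such x and every such collection of weights and biases. -/
/-- Activations of a fully-connected feed-forward network with pointwise activation `σ`,
layer widths `n`, weight matrices `W` and biases `b`: `z⁽⁰⁾ = x`,
`z⁽ᵏ⁺¹⁾ᵢ = σ (∑ⱼ W⁽ᵏ⁾ᵢⱼ z⁽ᵏ⁾ⱼ + b⁽ᵏ⁾ᵢ)`.  The pre-activation of layer `k+1` is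
`ζ⁽ᵏ⁺¹⁾ᵢ = ∑ⱼ W⁽ᵏ⁾ᵢⱼ z⁽ᵏ⁾ⱼ + b⁽ᵏ⁾ᵢ`, and the network output is `ζ⁽ᴷ⁺¹⁾`. -/
noncomputable def nnAct (σ : ℝ → ℝ) (n : ℕ → ℕ)
    (W : ∀ k, Fin (n (k + 1)) → Fin (n k) → ℝ) (b : ∀ k, Fin (n (k + 1)) → ℝ)
    (x : Fin (n 0) → ℝ) : ∀ k, Fin (n k) → ℝ
  | 0 => x
  | (k + 1) => fun i => σ ((∑ j, W k i j * nnAct σ n W b x k j) + b k i)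

/-- Interval bound propagation: lower and upper activation bounds
`(z⁽ᵏ⁾,ᴸ, z⁽ᵏ⁾,ᵁ)` at every layer `k`, computed from the input box `[xL, xU]`, the weight
interval bounds `[WL, WU]` and the bias interval bounds `[bL, bU]`, by taking cornerwise
minima/maxima of the bilinear monomials and applying `σ` to the resulting pre-activation
bounds. -/
noncomputable def ibpBounds (σ : ℝ → ℝ) (n : ℕ → ℕ)
    (WL WU : ∀ k, Fin (n (k + 1)) → Fin (n k) → ℝ) (bL bU : ∀ k, Fin (n (k + 1)) → ℝ)
    (xL xU : Fin (n 0) → ℝ) : ∀ k, (Fin (n k) → ℝ) × (Fin (n k) → ℝ)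
  | 0 => (xL, xU)
  | (k + 1) =>
    (fun i => σ ((∑ j,
        min (min (WL k i j * (ibpBounds σ n WL WU bL bU xL xU k).1 j)
                 (WU k i j * (ibpBounds σ n WL WU bL bU xL xU k).1 j))
            (min (WL k i j * (ibpBounds σ n WL WU bL bU xL xU k).2 j)
                 (WU k i j * (ibpBounds σ n WL WU bL bU xL xU k).2 j))) + bL k i),
     fun i => σ ((∑ j,
        max (max (WL k i j * (ibpBounds σ n WL WU bL bU xL xU k).1 j)
                 (WU k i j * (ibpBounds σ n WL WU bL bU xL xU k).1 j))
            (max (WL k i j * (ibpBounds σ n WL WU bL bU xL xU k).2 j)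
                 (WU k i j * (ibpBounds σ n WL WU bL bU xL xU k).2 j))) + bU k i))

/-!
Induct over the layers. Each pre-activation is a sum of products `w * z` with `(w, z)` ranging
over a box, and such a bilinear product is bounded on the box by its values at the four corners;
adding the bias is monotone, and the monotone `σ` carries the resulting interval to the next layer.
-/

section CornerBounds

variable {α : Type*} [Ring α] [LinearOrder α] [IsStrictOrderedRing α]

lemma min_mul_le_mul {wL w wU z : α} (hwL : wL ≤ w) (hwU : w ≤ wU) :
    min (wL * z) (wU * z) ≤ w * z := by
  rcases le_total 0 z with hz | hz
  · exact (min_le_left _ _).trans (mul_le_mul_of_nonneg_right hwL hz)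
  · exact (min_le_right _ _).trans (mul_le_mul_of_nonpos_right hwU hz)

lemma mul_le_max_mul {wL w wU z : α} (hwL : wL ≤ w) (hwU : w ≤ wU) :
    w * z ≤ max (wL * z) (wU * z) := by
  rcases le_total 0 z with hz | hz
  · exact (mul_le_mul_of_nonneg_right hwU hz).trans (le_max_right _ _)
  · exact (mul_le_mul_of_nonpos_right hwL hz).trans (le_max_left _ _)

lemma min_corners_le_mul {wL w wU zL z zU : α} (hwL : wL ≤ w) (hwU : w ≤ wU)
    (hzL : zL ≤ z) (hzU : z ≤ zU) :
    min (min (wL * zL) (wU * zL)) (min (wL * zU) (wU * zU)) ≤ w * z := by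
  rcases le_total 0 w with hw | hw
  · calc _ ≤ min (wL * zL) (wU * zL) := min_le_left _ _
      _ ≤ w * zL := min_mul_le_mul hwL hwU
      _ ≤ w * z := mul_le_mul_of_nonneg_left hzL hw
  · calc _ ≤ min (wL * zU) (wU * zU) := min_le_right _ _
      _ ≤ w * zU := min_mul_le_mul hwL hwU
      _ ≤ w * z := mul_le_mul_of_nonpos_left hzU hw

lemma mul_le_max_corners {wL w wU zL z zU : α} (hwL : wL ≤ w) (hwU : w ≤ wU)
    (hzL : zL ≤ z) (hzU : z ≤ zU) :
    w * z ≤ max (max (wL * zL) (wU * zL)) (max (wL * zU) (wU * zU)) := by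
  rcases le_total 0 w with hw | hw
  · calc w * z ≤ w * zU := mul_le_mul_of_nonneg_left hzU hw
      _ ≤ max (wL * zU) (wU * zU) := mul_le_max_mul hwL hwU
      _ ≤ _ := le_max_right _ _
  · calc w * z ≤ w * zL := mul_le_mul_of_nonpos_left hzL hw
      _ ≤ max (wL * zL) (wU * zL) := mul_le_max_mul hwL hwU
      _ ≤ _ := le_max_left _ _

lemma sum_mul_add_mem_corner_bounds {ι : Type*} [Fintype ι] {wL w wU zL z zU : ι → α}
    {bL b bU : α} (hw : ∀ j, wL j ≤ w j ∧ w j ≤ wU j) (hz : ∀ j, zL j ≤ z j ∧ z j ≤ zU j)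
    (hb : bL ≤ b ∧ b ≤ bU) :
    (∑ j, min (min (wL j * zL j) (wU j * zL j)) (min (wL j * zU j) (wU j * zU j))) + bL
        ≤ (∑ j, w j * z j) + b ∧
      (∑ j, w j * z j) + b
        ≤ (∑ j, max (max (wL j * zL j) (wU j * zL j)) (max (wL j * zU j) (wU j * zU j))) + bU :=
  ⟨add_le_add (Finset.sum_le_sum fun j _ ↦
      min_corners_le_mul (hw j).1 (hw j).2 (hz j).1 (hz j).2) hb.1,
    add_le_add (Finset.sum_le_sum fun j _ ↦
      mul_le_max_corners (hw j).1 (hw j).2 (hz j).1 (hz j).2) hb.2⟩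

end CornerBounds

lemma nnAct_mem_ibpBounds {σ : ℝ → ℝ} (hσ : Monotone σ) {n : ℕ → ℕ}
    {W WL WU : ∀ k, Fin (n (k + 1)) → Fin (n k) → ℝ} {b bL bU : ∀ k, Fin (n (k + 1)) → ℝ}
    {x xL xU : Fin (n 0) → ℝ} (hx : ∀ j, xL j ≤ x j ∧ x j ≤ xU j) :
    ∀ K, (∀ k < K, ∀ i j, WL k i j ≤ W k i j ∧ W k i j ≤ WU k i j) →
      (∀ k < K, ∀ i, bL k i ≤ b k i ∧ b k i ≤ bU k i) →
      ∀ j, (ibpBounds σ n WL WU bL bU xL xU K).1 j ≤ nnAct σ n W b x K j ∧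
        nnAct σ n W b x K j ≤ (ibpBounds σ n WL WU bL bU xL xU K).2 j
  | 0, _, _ => hx
  | K + 1, hW, hb => fun i ↦
    have hK := sum_mul_add_mem_corner_bounds (hW K K.lt_succ_self i)
      (nnAct_mem_ibpBounds hσ hx K (fun k hk ↦ hW k (hk.trans K.lt_succ_self))
        (fun k hk ↦ hb k (hk.trans K.lt_succ_self))) (hb K K.lt_succ_self i)
    ⟨hσ hK.1, hσ hK.2⟩

/-- Soundness of interval bound propagation (IBP) jointly over an input box and weight/bias
hyper-rectangles: for a monotone activation `σ`, the network output
`f^w(x) = ζ⁽ᴷ⁺¹⁾` lies componentwise in `[ζ⁽ᴷ⁺¹⁾,ᴸ, ζ⁽ᴷ⁺¹⁾,ᵁ]` for every input in the box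
and every collection of weights and biases in the given intervals. -/
theorem ibp_sound (σ : ℝ → ℝ) (hσ : Monotone σ) (n : ℕ → ℕ) (K : ℕ)
    (W WL WU : ∀ k, Fin (n (k + 1)) → Fin (n k) → ℝ)
    (b bL bU : ∀ k, Fin (n (k + 1)) → ℝ)
    (x xL xU : Fin (n 0) → ℝ)
    (hx : ∀ j, xL j ≤ x j ∧ x j ≤ xU j)
    (hW : ∀ k, k ≤ K → ∀ i j, WL k i j ≤ W k i j ∧ W k i j ≤ WU k i j)
    (hb : ∀ k, k ≤ K → ∀ i, bL k i ≤ b k i ∧ b k i ≤ bU k i) :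
    ∀ i : Fin (n (K + 1)),
      (∑ j, min (min (WL K i j * (ibpBounds σ n WL WU bL bU xL xU K).1 j)
                     (WU K i j * (ibpBounds σ n WL WU bL bU xL xU K).1 j))
                (min (WL K i j * (ibpBounds σ n WL WU bL bU xL xU K).2 j)
                     (WU K i j * (ibpBounds σ n WL WU bL bU xL xU K).2 j))) + bL K i
        ≤ (∑ j, W K i j * nnAct σ n W b x K j) + b K i ∧
      (∑ j, W K i j * nnAct σ n W b x K j) + b K i
        ≤ (∑ j, max (max (WL K i j * (ibpBounds σ n WL WU bL bU xL xU K).1 j)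
                         (WU K i j * (ibpBounds σ n WL WU bL bU xL xU K).1 j))
                    (max (WL K i j * (ibpBounds σ n WL WU bL bU xL xU K).2 j)
                         (WU K i j * (ibpBounds σ n WL WU bL bU xL xU K).2 j))) + bU K i := fun i ↦
  sum_mul_add_mem_corner_bounds (hW K le_rfl i)
    (nnAct_mem_ibpBounds hσ hx K (fun k hk ↦ hW k hk.le) (fun k hk ↦ hb k hk.le)) (hb K le_rfl i)
end
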